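/- Let μ be a probability measure on ℝ with finite first moment. For x < r_μ define the barycentre ψ_μ(x) = (1/μ̄(x))·∫_{[x,∞)} s μ(ds), where μ̄(x) = μ([x,∞)). Then ψ_μ(x) = AVaR_μ(μ̄(x)) for all x < r_μ. -/

import Mathlib

open MeasureTheory Set Filter Topology

/-- Tail function `μ([x,∞))`. -/
noncomputable def tailFn (μ : Measure ℝ) (x : ℝ) : ℝ := (μ (Ici x)).toReal

/-- Tail quantile function: left-continuous inverse of the tail function. -/
noncomputable def tailQ (μ : Measure ℝ) (l : ℝ) : ℝ := sInf {x : ℝ | tailFn μ x < l}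

/-- Call function `C_μ(K) = ∫ (s-K)⁺ μ(ds)`. -/
noncomputable def callFn (μ : Measure ℝ) (K : ℝ) : ℝ := ∫ s, max (s - K) 0 ∂μ

/-- Average Value at Risk at level `l`. -/
noncomputable def avar (μ : Measure ℝ) (l : ℝ) : ℝ := (1 / l) * ∫ u in (0 : ℝ)..l, tailQ μ u

/-- Hardy–Littlewood transform of `μ`: the law of `AVaR_μ(ξ)` for `ξ` uniform on `[0,1]`. -/
noncomputable def hlTransform (μ : Measure ℝ) : Measure ℝ :=
  Measure.map (avar μ) (volume.restrict (Ioc (0 : ℝ) 1))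

/-!
Since `x ↦ μ [x, ∞)` is antitone and left-continuous, its left-continuous inverse satisfies
`x ≤ tailQ μ u ↔ u ≤ μ [x, ∞)` for `0 < u < 1`. Hence `tailQ μ` pushes Lebesgue measure on
`(0, 1)` forward to `μ`, and `{u ∈ (0, 1) | x ≤ tailQ μ u}` is `(0, μ [x, ∞)]` up to a null set,
so `∫_{[x, ∞)} s dμ = ∫_0^{μ [x, ∞)} tailQ μ`: the barycentre is the average of the quantile.
-/

section TailFunction

variable {μ : Measure ℝ}

lemma antitone_tailFn [IsFiniteMeasure μ] : Antitone (tailFn μ) := fun _ _ hab =>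
  ENNReal.toReal_mono (measure_ne_top μ _) (measure_mono (Ici_subset_Ici.2 hab))

lemma tailFn_le_one [IsProbabilityMeasure μ] (x : ℝ) : tailFn μ x ≤ 1 :=
  ENNReal.toReal_le_of_le_ofReal zero_le_one (by simpa using prob_le_one)

lemma tendsto_tailFn_atTop [IsFiniteMeasure μ] : Tendsto (tailFn μ) atTop (𝓝 0) := by
  have h := tendsto_measure_iInter_atTop (μ := μ) (fun _ => nullMeasurableSet_Ici)
    (fun _ _ hab => Ici_subset_Ici.2 hab) ⟨0, measure_ne_top μ _⟩
  have hempty : ⋂ x : ℝ, Ici x = ∅ :=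
    eq_empty_of_forall_notMem fun y hy => (lt_add_one y).not_ge (mem_iInter.1 hy (y + 1))
  rw [hempty, measure_empty] at h
  exact (ENNReal.tendsto_toReal ENNReal.zero_ne_top).comp h

lemma tendsto_tailFn_atBot [IsProbabilityMeasure μ] : Tendsto (tailFn μ) atBot (𝓝 1) := by
  have h := tendsto_measure_Ici_atBot μ
  rw [measure_univ] at h
  exact (ENNReal.tendsto_toReal ENNReal.one_ne_top).comp h

lemma tendsto_tailFn_sub_nhdsGT [IsFiniteMeasure μ] (x : ℝ) :
    Tendsto (fun δ => tailFn μ (x - δ)) (𝓝[>] 0) (𝓝 (tailFn μ x)) := by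
  have hIci : ⋂ δ > (0 : ℝ), Ici (x - δ) = Ici x := by
    ext y
    simp only [mem_iInter, mem_Ici]
    exact ⟨fun h => le_of_forall_pos_le_add fun δ hδ => by linarith [h δ hδ],
      fun h δ hδ => by linarith⟩
  have h := tendsto_measure_biInter_gt (μ := μ) (s := fun δ => Ici (x - δ))
    (fun _ _ => nullMeasurableSet_Ici)
    (fun _ _ _ hij => Ici_subset_Ici.2 (sub_le_sub_left hij x)) ⟨1, one_pos, measure_ne_top μ _⟩
  rw [hIci] at h
  exact (ENNReal.tendsto_toReal (measure_ne_top μ _)).comp h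

end TailFunction

section TailQuantile

variable {μ : Measure ℝ} [IsProbabilityMeasure μ]

lemma le_tailQ_iff {u : ℝ} (hu : u ∈ Ioo 0 1) (x : ℝ) : x ≤ tailQ μ u ↔ u ≤ tailFn μ x := by
  have hne : {y | tailFn μ y < u}.Nonempty :=
    ((tendsto_tailFn_atTop (μ := μ)).eventually (eventually_lt_nhds hu.1)).exists
  have hbdd : BddBelow {y | tailFn μ y < u} := by
    obtain ⟨z, hz⟩ := ((tendsto_tailFn_atBot (μ := μ)).eventually (eventually_gt_nhds hu.2)).exists
    exact ⟨z, fun y (hy : tailFn μ y < u) =>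
      le_of_lt (lt_of_not_ge fun hyz => (hy.trans hz).not_ge (antitone_tailFn hyz))⟩
  rw [tailQ, le_csInf_iff hbdd hne]
  constructor
  · intro h
    by_contra! hx
    obtain ⟨δ, hlt, hδ⟩ := ((tendsto_tailFn_sub_nhdsGT (μ := μ) x).eventually
      (eventually_lt_nhds hx) |>.and self_mem_nhdsWithin).exists
    linarith [h _ hlt]
  · intro h y (hy : tailFn μ y < u)
    by_contra! hyx
    exact (hy.trans_le h).not_ge (antitone_tailFn hyx.le)

lemma antitoneOn_tailQ : AntitoneOn (tailQ μ) (Ioo 0 1) := fun _ ha _ hb hab =>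
  (le_tailQ_iff ha _).2 (hab.trans ((le_tailQ_iff hb _).1 le_rfl))

lemma aemeasurable_tailQ : AEMeasurable (tailQ μ) (volume.restrict (Ioo 0 1)) :=
  aemeasurable_restrict_of_antitoneOn measurableSet_Ioo antitoneOn_tailQ

lemma preimage_tailQ_Ici_inter_ae_eq (x : ℝ) :
    (tailQ μ ⁻¹' Ici x ∩ Ioo 0 1 : Set ℝ) =ᵐ[volume] Ioc 0 (tailFn μ x) := by
  have hpre : tailQ μ ⁻¹' Ici x ∩ Ioo 0 1 = Iic (tailFn μ x) ∩ Ioo 0 1 := by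
    ext u
    simp only [mem_inter_iff, mem_preimage, mem_Ici, mem_Iic]
    exact and_congr_left (le_tailQ_iff · x)
  have hIoo : Iio (tailFn μ x) ∩ Ioo 0 1 = Ioo 0 (tailFn μ x) := by
    rw [inter_comm, Ioo_inter_Iio, min_eq_right (tailFn_le_one x)]
  rw [hpre]
  refine (Iio_ae_eq_Iic.symm.inter (ae_eq_refl (Ioo (0 : ℝ) 1))).trans ?_
  rw [hIoo]
  exact Ioo_ae_eq_Ioc

lemma map_tailQ_volume : (volume.restrict (Ioo 0 1)).map (tailQ μ) = μ := by
  refine (Measure.ext_of_Ici μ _ fun x => ?_).symm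
  rw [Measure.map_apply_of_aemeasurable aemeasurable_tailQ measurableSet_Ici,
    Measure.restrict_apply' measurableSet_Ioo, measure_congr (preimage_tailQ_Ici_inter_ae_eq x),
    Real.volume_Ioc, sub_zero, tailFn, ENNReal.ofReal_toReal (measure_ne_top μ _)]

lemma setIntegral_Ici_eq_integral_tailQ (x : ℝ) :
    ∫ s in Ici x, s ∂μ = ∫ u in (0 : ℝ)..tailFn μ x, tailQ μ u := by
  conv_lhs => rw [← map_tailQ_volume (μ := μ)]
  rw [setIntegral_map (f := fun s => s) measurableSet_Ici aestronglyMeasurable_id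
      aemeasurable_tailQ,
    Measure.restrict_restrict' measurableSet_Ioo,
    setIntegral_congr_set (preimage_tailQ_Ici_inter_ae_eq x)]
  exact (intervalIntegral.integral_of_le ENNReal.toReal_nonneg).symm

end TailQuantile

theorem stmt_8_general (μ : Measure ℝ) [IsProbabilityMeasure μ] :
    ∀ x : ℝ, 0 < μ (Ioi x) →
      (1 / tailFn μ x) * ∫ s in Ici x, s ∂μ = avar μ (tailFn μ x) := by
  intro x _
  rw [avar, setIntegral_Ici_eq_integral_tailQ]

theorem stmt_8 (μ : Measure ℝ) [IsProbabilityMeasure μ] (hμ : Integrable id μ) :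
    ∀ x : ℝ, 0 < μ (Ioi x) →
      (1 / tailFn μ x) * ∫ s in Ici x, s ∂μ = avar μ (tailFn μ x) :=
  stmt_8_general μ
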